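/- arXiv:math/0203045 — 5 statements merged into one kernel-verified Lean document; each statement's English description precedes it below -/
import Mathlib

section
/- For continuous functions F, G : [0,∞) → ℂ with |F(s)| ≤ A·e^{νs}/(M₀(1+s²)) and |G(s)| ≤ B·e^{νs}/(M₀(1+s²)) for all s ≥ 0, where M₀ := sup_{s>0} 2(1+s²)(ln(1+s²)+s·arctan s)/(s(s²+4)), the convolution satisfies |∫₀^q F(s)G(q−s) ds| ≤ A·B·e^{νq}/(M₀(1+q²)) for every q ≥ 0. -/
/-!
The weight `w(s) = e^{νs} / (1 + s²)` is submultiplicative under convolution up to the factor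
`M₀`: the exponentials combine exactly, `e^{νs} e^{ν(q-s)} = e^{νq}`, so everything reduces to the
kernel integral `∫₀^q ds / ((1 + s²)(1 + (q - s)²))`. Partial fractions evaluate it as
`2 (log(1 + q²) + q arctan q) / (q (q² + 4))`, and `M₀` is by definition the supremum of `1 + q²`
times this value.
-/

open MeasureTheory Real Set

/-- The constant `M₀ = sup_{s>0} 2(1+s²)(ln(1+s²)+s arctan s)/(s(s²+4))`. -/
noncomputable def M0 : ℝ :=
  sSup ((fun s : ℝ =>
      2 * (1 + s ^ 2) * (Real.log (1 + s ^ 2) + s * Real.arctan s) / (s * (s ^ 2 + 4))) ''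
    Set.Ioi 0)

lemma log_one_add_sq_le_two_mul {s : ℝ} (hs : 0 ≤ s) : log (1 + s ^ 2) ≤ 2 * s := by
  calc log (1 + s ^ 2) ≤ log ((1 + s) ^ 2) := log_le_log (by positivity) (by nlinarith)
    _ = 2 * log (1 + s) := by rw [log_pow]; norm_num
    _ ≤ 2 * s := by linarith [log_le_sub_one_of_pos (show (0 : ℝ) < 1 + s by linarith)]

lemma bddAbove_M0_set : BddAbove ((fun s : ℝ =>
      2 * (1 + s ^ 2) * (Real.log (1 + s ^ 2) + s * Real.arctan s) / (s * (s ^ 2 + 4))) ''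
    Set.Ioi 0) := by
  refine ⟨4 + π, ?_⟩
  rintro _ ⟨s, hs : 0 < s, rfl⟩
  have hlog := log_one_add_sq_le_two_mul hs.le
  have harctan : arctan s ≤ π / 2 := (arctan_lt_pi_div_two s).le
  have hslog : 0 ≤ (1 + s ^ 2) * (2 * s - log (1 + s ^ 2)) := by
    apply mul_nonneg <;> [positivity; linarith]
  have hsarctan : 0 ≤ (1 + s ^ 2) * s * (π / 2 - arctan s) := by
    apply mul_nonneg <;> [positivity; linarith]
  rw [div_le_iff₀ (by positivity)]
  nlinarith [mul_nonneg hs.le pi_pos.le, pow_nonneg hs.le 3]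

lemma le_M0 {s : ℝ} (hs : 0 < s) :
    2 * (1 + s ^ 2) * (log (1 + s ^ 2) + s * arctan s) / (s * (s ^ 2 + 4)) ≤ M0 :=
  le_csSup bddAbove_M0_set ⟨s, hs, rfl⟩

lemma M0_pos : 0 < M0 := by
  have harctan : 0 < arctan 1 := by rw [arctan_one]; positivity
  have hlog : 0 < log (1 + 1 ^ 2) := log_pos (by norm_num)
  exact lt_of_lt_of_le (by positivity) (le_M0 one_pos)

lemma integral_inv_one_add_sq_mul_one_add_sub_sq (a : ℝ) :
    ∫ s in (0 : ℝ)..a, ((1 + s ^ 2) * (1 + (a - s) ^ 2))⁻¹ =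
      2 * (log (1 + a ^ 2) + a * arctan a) / (a * (a ^ 2 + 4)) := by
  rcases eq_or_ne a 0 with rfl | ha
  · simp -- the right-hand side is `0 / 0 = 0`
  -- `((1 + s²)(1 + (a - s)²))⁻¹ = (α s + β) / (1 + s²) + (α (a - s) + β) / (1 + (a - s)²)`
  set α : ℝ := 2 / (a * (4 + a ^ 2))
  set β : ℝ := 1 / (4 + a ^ 2)
  have hderiv : ∀ s : ℝ, HasDerivAt
      (fun s => α / 2 * log (1 + s ^ 2) + β * arctan s
        - α / 2 * log (1 + (a - s) ^ 2) - β * arctan (a - s))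
      ((1 + s ^ 2) * (1 + (a - s) ^ 2))⁻¹ s := by
    intro s
    have hsub : HasDerivAt (fun s : ℝ => a - s) (-1) s := by
      simpa using (hasDerivAt_id s).const_sub a
    have hsq : HasDerivAt (fun s : ℝ => 1 + s ^ 2) (2 * s) s := by
      simpa using (hasDerivAt_pow 2 s).const_add 1
    have hsq' : HasDerivAt (fun s : ℝ => 1 + (a - s) ^ 2) (2 * (a - s) * (-1)) s := by
      exact (((hasDerivAt_pow 2 (a - s)).comp s hsub).const_add 1).congr_deriv (by ring)
    have := ((((hsq.log (by positivity)).const_mul (α / 2)).add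
      ((hasDerivAt_arctan s).const_mul β)).sub
      ((hsq'.log (by positivity)).const_mul (α / 2))).sub
      (((hasDerivAt_arctan (a - s)).comp s hsub).const_mul β)
    refine this.congr_deriv ?_
    simp only [α, β]
    field_simp
    ring
  have hcont : Continuous fun s : ℝ => ((1 + s ^ 2) * (1 + (a - s) ^ 2))⁻¹ :=
    Continuous.inv₀ (by fun_prop) fun s => by positivity
  rw [intervalIntegral.integral_eq_sub_of_hasDerivAt (fun s _ => hderiv s)
    (hcont.intervalIntegrable 0 a)]
  simp only [sub_zero, sub_self, arctan_zero, zero_pow two_ne_zero, add_zero, log_one, mul_zero]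
  simp only [α, β]
  field_simp
  ring

lemma integral_inv_one_add_sq_mul_one_add_sub_sq_le_M0 {q : ℝ} (hq : 0 ≤ q) :
    ∫ s in (0 : ℝ)..q, ((1 + s ^ 2) * (1 + (q - s) ^ 2))⁻¹ ≤ M0 / (1 + q ^ 2) := by
  rw [integral_inv_one_add_sq_mul_one_add_sub_sq, le_div_iff₀ (by positivity)]
  rcases hq.eq_or_lt with rfl | hq
  · simpa using M0_pos.le
  calc 2 * (log (1 + q ^ 2) + q * arctan q) / (q * (q ^ 2 + 4)) * (1 + q ^ 2)
      = 2 * (1 + q ^ 2) * (log (1 + q ^ 2) + q * arctan q) / (q * (q ^ 2 + 4)) := by ring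
    _ ≤ M0 := le_M0 hq

lemma norm_mul_le_of_norm_le_weighted {F G : ℝ → ℂ} {ν A B M t q : ℝ}
    (hF : ‖F t‖ ≤ A * exp (ν * t) / (M * (1 + t ^ 2)))
    (hG : ‖G (q - t)‖ ≤ B * exp (ν * (q - t)) / (M * (1 + (q - t) ^ 2))) :
    ‖F t * G (q - t)‖ ≤
      A * B * exp (ν * q) / M ^ 2 * ((1 + t ^ 2) * (1 + (q - t) ^ 2))⁻¹ := by
  have hexp : exp (ν * t) * exp (ν * (q - t)) = exp (ν * q) := by rw [← exp_add]; ring_nf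
  calc ‖F t * G (q - t)‖ = ‖F t‖ * ‖G (q - t)‖ := norm_mul _ _
    _ ≤ A * exp (ν * t) / (M * (1 + t ^ 2)) *
        (B * exp (ν * (q - t)) / (M * (1 + (q - t) ^ 2))) :=
      mul_le_mul hF hG (norm_nonneg _) ((norm_nonneg _).trans hF)
    _ = A * B * exp (ν * q) / M ^ 2 * ((1 + t ^ 2) * (1 + (q - t) ^ 2))⁻¹ := by
      rw [← hexp]
      field_simp

theorem stmt_2_general (ν A B : ℝ) (hA : 0 ≤ A) (hB : 0 ≤ B)
    (F G : ℝ → ℂ)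
    (hF : ∀ s, 0 ≤ s → ‖F s‖ ≤ A * Real.exp (ν * s) / (M0 * (1 + s ^ 2)))
    (hG : ∀ s, 0 ≤ s → ‖G s‖ ≤ B * Real.exp (ν * s) / (M0 * (1 + s ^ 2))) :
    ∀ q, 0 ≤ q →
      ‖∫ s in (0:ℝ)..q, F s * G (q - s)‖ ≤ A * B * Real.exp (ν * q) / (M0 * (1 + q ^ 2)) := by
  intro q hq
  set C := A * B * exp (ν * q) / M0 ^ 2
  have hkernel : Continuous fun s : ℝ => C * ((1 + s ^ 2) * (1 + (q - s) ^ 2))⁻¹ :=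
    continuous_const.mul (Continuous.inv₀ (by fun_prop) fun s => by positivity)
  have hM0 := M0_pos
  calc ‖∫ s in (0:ℝ)..q, F s * G (q - s)‖
      ≤ ∫ s in (0:ℝ)..q, C * ((1 + s ^ 2) * (1 + (q - s) ^ 2))⁻¹ :=
        intervalIntegral.norm_integral_le_of_norm_le hq
          (ae_of_all _ fun t ht => norm_mul_le_of_norm_le_weighted (hF t ht.1.le)
            (hG (q - t) (sub_nonneg.2 ht.2)))
          (hkernel.intervalIntegrable 0 q)
    _ = C * ∫ s in (0:ℝ)..q, ((1 + s ^ 2) * (1 + (q - s) ^ 2))⁻¹ :=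
        intervalIntegral.integral_const_mul _ _
    _ ≤ C * (M0 / (1 + q ^ 2)) := by
        gcongr
        exact integral_inv_one_add_sq_mul_one_add_sub_sq_le_M0 hq
    _ = A * B * exp (ν * q) / (M0 * (1 + q ^ 2)) := by
        simp only [C]
        field_simp

theorem stmt_2 (ν A B : ℝ) (hν : 0 < ν) (hA : 0 ≤ A) (hB : 0 ≤ B)
    (F G : ℝ → ℂ) (hFc : ContinuousOn F (Set.Ici 0)) (hGc : ContinuousOn G (Set.Ici 0))
    (hF : ∀ s, 0 ≤ s → ‖F s‖ ≤ A * Real.exp (ν * s) / (M0 * (1 + s ^ 2)))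
    (hG : ∀ s, 0 ≤ s → ‖G s‖ ≤ B * Real.exp (ν * s) / (M0 * (1 + s ^ 2))) :
    ∀ q, 0 ≤ q →
      ‖∫ s in (0:ℝ)..q, F s * G (q - s)‖ ≤ A * B * Real.exp (ν * q) / (M0 * (1 + q ^ 2)) :=
  stmt_2_general ν A B hA hB F G hF hG
end

section
/- Let H, F : [0,∞) → ℂ be continuous with |H(s)| ≤ C·s^{α−1}·e^{ρs} and |F(s)| ≤ N·e^{νs}/(1+s²), where α > 0, C, N ≥ 0, and ν ≥ ρ + 1. Then for all q ≥ 0: ∫₀^q |H(s)|·|F(q−s)| ds ≤ K·C·Γ(α)·(ν−ρ)^{−α}·N·e^{νq}/(1+q²) for some constant K depending only on α. -/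
/-!
Write `λ = ν - ρ ≥ 1`. Peetre's inequality `1 + q² ≤ 2 (1 + s²) (1 + (q - s)²)` moves the decay
factor of `F (q - s)` out of the integral at the price of a factor `1 + s²`, and
`e^{ρ s} e^{ν (q - s)} = e^{ν q} e^{-λ s}`. What is left is bounded by the Gamma integral
`∫₀^∞ s^{α-1} (1 + s²) e^{-λ s} ds = Γ(α) λ^{-α} + Γ(α + 2) λ^{-α-2}`, and `λ ≥ 1` turns this
into `(1 + α (α + 1)) Γ(α) λ^{-α}`.
-/

open MeasureTheory Real Set

lemma one_add_sq_le_two_mul_one_add_sq_mul_one_add_sq (q s : ℝ) :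
    1 + q ^ 2 ≤ 2 * (1 + s ^ 2) * (1 + (q - s) ^ 2) := by
  nlinarith [sq_nonneg (q - 2 * s), sq_nonneg (s * (q - s))]

section GammaIntegral

variable {a r : ℝ}

lemma integrableOn_rpow_mul_exp_neg_mul_Ioi (ha : 0 < a) (hr : 0 < r) :
    IntegrableOn (fun t : ℝ ↦ t ^ (a - 1) * exp (-(r * t))) (Ioi 0) :=
  .of_integral_ne_zero (by rw [integral_rpow_mul_exp_neg_mul_Ioi ha hr]; positivity)

lemma rpow_mul_one_add_sq_mul_exp_eqOn (a r : ℝ) :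
    EqOn (fun t : ℝ ↦ t ^ (a - 1) * exp (-(r * t)) + t ^ (a + 2 - 1) * exp (-(r * t)))
      (fun t ↦ t ^ (a - 1) * (1 + t ^ 2) * exp (-(r * t))) (Ioi 0) := by
  intro t (ht : 0 < t)
  have hpow : t ^ (a + 2 - 1) = t ^ (a - 1) * t ^ 2 := by
    rw [show a + 2 - 1 = a - 1 + (2 : ℕ) by push_cast; ring, rpow_add_natCast ht.ne']
  simp only [hpow]
  ring

lemma integrableOn_rpow_mul_one_add_sq_mul_exp_neg_mul_Ioi (ha : 0 < a) (hr : 0 < r) :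
    IntegrableOn (fun t : ℝ ↦ t ^ (a - 1) * (1 + t ^ 2) * exp (-(r * t))) (Ioi 0) :=
  ((integrableOn_rpow_mul_exp_neg_mul_Ioi ha hr).add
    (integrableOn_rpow_mul_exp_neg_mul_Ioi (by linarith) hr)).congr_fun
    (rpow_mul_one_add_sq_mul_exp_eqOn a r) measurableSet_Ioi

lemma integral_rpow_mul_one_add_sq_mul_exp_neg_mul_Ioi (ha : 0 < a) (hr : 0 < r) :
    ∫ t in Ioi 0, t ^ (a - 1) * (1 + t ^ 2) * exp (-(r * t)) =
      (1 / r) ^ a * Gamma a + (1 / r) ^ (a + 2) * Gamma (a + 2) := by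
  rw [← setIntegral_congr_fun measurableSet_Ioi (rpow_mul_one_add_sq_mul_exp_eqOn a r),
    integral_add (integrableOn_rpow_mul_exp_neg_mul_Ioi ha hr)
      (integrableOn_rpow_mul_exp_neg_mul_Ioi (by linarith) hr),
    integral_rpow_mul_exp_neg_mul_Ioi ha hr, integral_rpow_mul_exp_neg_mul_Ioi (by linarith) hr]

lemma integral_rpow_mul_one_add_sq_mul_exp_neg_mul_Ioi_le (ha : 0 < a) (hr : 1 ≤ r) :
    ∫ t in Ioi 0, t ^ (a - 1) * (1 + t ^ 2) * exp (-(r * t)) ≤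
      (1 + a * (a + 1)) * Gamma a * r ^ (-a) := by
  have hr₀ : 0 < r := by linarith
  have hinv : (1 / r) ^ a = r ^ (-a) := by
    rw [one_div, rpow_neg hr₀.le, inv_rpow hr₀.le]
  have hinv_le : (1 / r) ^ (a + 2) ≤ r ^ (-a) :=
    hinv ▸ rpow_le_rpow_of_exponent_ge (by positivity) ((div_le_one hr₀).mpr hr) (by linarith)
  have hGamma : Gamma (a + 2) = a * (a + 1) * Gamma a := by
    rw [show a + 2 = a + 1 + 1 by ring, Gamma_add_one (by positivity), Gamma_add_one ha.ne']
    ring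
  rw [integral_rpow_mul_one_add_sq_mul_exp_neg_mul_Ioi ha hr₀, hinv, hGamma]
  have : 0 ≤ a * (a + 1) * Gamma a := by have := Gamma_pos_of_pos ha; positivity
  nlinarith [mul_le_mul_of_nonneg_right hinv_le this]

lemma intervalIntegral_rpow_mul_one_add_sq_mul_exp_neg_mul_le (ha : 0 < a) (hr : 1 ≤ r)
    {q : ℝ} (hq : 0 ≤ q) :
    ∫ t in (0 : ℝ)..q, t ^ (a - 1) * (1 + t ^ 2) * exp (-(r * t)) ≤
      (1 + a * (a + 1)) * Gamma a * r ^ (-a) := by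
  refine le_trans ?_ (integral_rpow_mul_one_add_sq_mul_exp_neg_mul_Ioi_le ha hr)
  rw [intervalIntegral.integral_of_le hq]
  refine setIntegral_mono_set
    (integrableOn_rpow_mul_one_add_sq_mul_exp_neg_mul_Ioi ha (by linarith)) ?_
    Ioc_subset_Ioi_self.eventuallyLE
  filter_upwards [ae_restrict_mem measurableSet_Ioi] with t (ht : 0 < t)
  positivity

end GammaIntegral

lemma intervalIntegrable_norm_mul_norm_comp_sub {E F : Type*} [NormedAddCommGroup E]
    [NormedAddCommGroup F] {f : ℝ → E} {g : ℝ → F} (hf : ContinuousOn f (Ici 0))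
    (hg : ContinuousOn g (Ici 0)) {q : ℝ} (hq : 0 ≤ q) :
    IntervalIntegrable (fun s ↦ ‖f s‖ * ‖g (q - s)‖) volume 0 q := by
  refine ContinuousOn.intervalIntegrable ?_
  rw [uIcc_of_le hq]
  refine ((hf.mono fun s hs ↦ hs.1).norm).mul
    ((hg.comp (continuous_const.sub continuous_id).continuousOn fun s hs ↦ ?_).norm)
  exact sub_nonneg.mpr hs.2

lemma mul_le_of_le_rpow_mul_exp_of_le_exp_div_one_add_sq {C N α ρ ν q s x y : ℝ}
    (hC : 0 ≤ C) (hN : 0 ≤ N) (hs : 0 ≤ s) (hy : 0 ≤ y)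
    (hx : x ≤ C * s ^ (α - 1) * exp (ρ * s))
    (hy' : y ≤ N * exp (ν * (q - s)) / (1 + (q - s) ^ 2)) :
    x * y ≤ 2 * C * N * exp (ν * q) / (1 + q ^ 2) *
      (s ^ (α - 1) * (1 + s ^ 2) * exp (-((ν - ρ) * s))) := by
  have hexp : exp (ρ * s) * exp (ν * (q - s)) = exp (ν * q) * exp (-((ν - ρ) * s)) := by
    rw [← exp_add, ← exp_add]; ring_nf
  have hpeetre : 1 / (1 + (q - s) ^ 2) ≤ 2 * (1 + s ^ 2) / (1 + q ^ 2) := by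
    rw [div_le_div_iff₀ (by positivity) (by positivity)]
    linarith [one_add_sq_le_two_mul_one_add_sq_mul_one_add_sq q s]
  calc x * y ≤ (C * s ^ (α - 1) * exp (ρ * s)) * (N * exp (ν * (q - s)) / (1 + (q - s) ^ 2)) :=
        mul_le_mul hx hy' hy (by positivity)
    _ = C * N * s ^ (α - 1) * exp (ν * q) * exp (-((ν - ρ) * s)) * (1 / (1 + (q - s) ^ 2)) := by
        linear_combination C * N * s ^ (α - 1) / (1 + (q - s) ^ 2) * hexp
    _ ≤ C * N * s ^ (α - 1) * exp (ν * q) * exp (-((ν - ρ) * s)) *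
          (2 * (1 + s ^ 2) / (1 + q ^ 2)) := by gcongr
    _ = _ := by ring

theorem stmt_4 (α : ℝ) (hα : 0 < α) :
    ∃ K : ℝ, 0 < K ∧
      ∀ (C N ρ ν : ℝ), 0 ≤ C → 0 ≤ N → ν ≥ ρ + 1 →
        ∀ (H F : ℝ → ℂ), ContinuousOn H (Set.Ici 0) → ContinuousOn F (Set.Ici 0) →
          (∀ s, 0 ≤ s → ‖H s‖ ≤ C * s ^ (α - 1) * Real.exp (ρ * s)) →
          (∀ s, 0 ≤ s → ‖F s‖ ≤ N * Real.exp (ν * s) / (1 + s ^ 2)) →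
          ∀ q, 0 ≤ q →
            ∫ s in (0:ℝ)..q, ‖H s‖ * ‖F (q - s)‖ ≤
              K * C * Real.Gamma α * (ν - ρ) ^ (-α) * N * Real.exp (ν * q) / (1 + q ^ 2) := by
  refine ⟨2 * (1 + α * (α + 1)), by positivity, ?_⟩
  intro C N ρ ν hC hN hνρ H F hH hF hHb hFb q hq
  have hr : 1 ≤ ν - ρ := by linarith
  set c := 2 * C * N * exp (ν * q) / (1 + q ^ 2)
  have hweight : IntervalIntegrable
      (fun s ↦ s ^ (α - 1) * (1 + s ^ 2) * exp (-((ν - ρ) * s))) volume 0 q :=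
    (intervalIntegrable_iff_integrableOn_Ioc_of_le hq).mpr
      ((integrableOn_rpow_mul_one_add_sq_mul_exp_neg_mul_Ioi hα (by linarith)).mono_set
        Ioc_subset_Ioi_self)
  calc ∫ s in (0:ℝ)..q, ‖H s‖ * ‖F (q - s)‖
      ≤ ∫ s in (0:ℝ)..q, c * (s ^ (α - 1) * (1 + s ^ 2) * exp (-((ν - ρ) * s))) :=
        intervalIntegral.integral_mono_on hq (intervalIntegrable_norm_mul_norm_comp_sub hH hF hq)
          (hweight.const_mul c) fun s hs ↦
            mul_le_of_le_rpow_mul_exp_of_le_exp_div_one_add_sq hC hN hs.1 (norm_nonneg _)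
              (hHb s hs.1) (hFb (q - s) (by linarith [hs.2]))
    _ = c * ∫ s in (0:ℝ)..q, s ^ (α - 1) * (1 + s ^ 2) * exp (-((ν - ρ) * s)) :=
        intervalIntegral.integral_const_mul _ _
    _ ≤ c * ((1 + α * (α + 1)) * Gamma α * (ν - ρ) ^ (-α)) := by
        gcongr
        exact intervalIntegral_rpow_mul_one_add_sq_mul_exp_neg_mul_le hα hr hq
    _ = _ := by ring
end

section
/- Let g : (0,∞) → ℂ satisfy |g(y)| ≤ A·y^{−α} with α > 2, and let k be the unique positive integer with α − k ∈ (1,2]. Define h(y) = (1/(k−1)!)·∫_∞^y g(z)(y−z)^{k−1} dz (integral along the real ray from ∞ to y). Then |h(y)| ≤ A·Γ(α−k)/(y^{α−k}·Γ(α)) for all y > 0. -/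
/-!
Bounding `‖g z‖` by `A z^(-α)` reduces the claim to the integral
`∫_y^∞ z^(-α) (z - y)^(k-1) dz`. The substitution `z = y / x` turns it into
`y^(k-α) B(α - k, k) = y^(k-α) Γ(α - k) (k-1)! / Γ(α)`, and the `(k-1)!` cancels
against the normalisation of `h`.
-/

open MeasureTheory Real Set

theorem integral_Ioo_rpow_mul_one_sub_rpow {s t : ℝ} (hs : 0 < s) (ht : 0 < t) :
    ∫ x in Ioo (0 : ℝ) 1, x ^ (s - 1) * (1 - x) ^ (t - 1) =
      Gamma s * Gamma t / Gamma (s + t) := by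
  have hB : Complex.betaIntegral s t =
      ((∫ x in Ioo (0 : ℝ) 1, x ^ (s - 1) * (1 - x) ^ (t - 1) : ℝ) : ℂ) := by
    rw [Complex.betaIntegral, intervalIntegral.integral_of_le zero_le_one,
      integral_Ioc_eq_integral_Ioo]
    refine (setIntegral_congr_fun measurableSet_Ioo fun x hx => ?_).trans integral_ofReal
    norm_cast
    rw [← Complex.ofReal_cpow hx.1.le, ← Complex.ofReal_cpow (by linarith [hx.2])]
    norm_cast
  have := Complex.betaIntegral_eq_Gamma_mul_div s t (by simpa) (by simpa)
  rw [hB, ← Complex.ofReal_add, Complex.Gamma_ofReal, Complex.Gamma_ofReal,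
    Complex.Gamma_ofReal] at this
  exact_mod_cast this

theorem image_div_Ioo_zero_one {y : ℝ} (hy : 0 < y) : (y / ·) '' Ioo 0 1 = Ioi y := by
  ext z
  constructor
  · rintro ⟨x, ⟨hx0, hx1⟩, rfl⟩
    exact (lt_div_iff₀ hx0).2 (by nlinarith)
  · intro (hz : y < z)
    have hz0 : 0 < z := hy.trans hz
    exact ⟨y / z, ⟨by positivity, (div_lt_one hz0).2 hz⟩, by field_simp⟩

theorem abs_deriv_smul_rpow_neg_mul_sub_rpow {y s t x : ℝ} (hy : 0 < y)
    (hx : x ∈ Ioo (0 : ℝ) 1) :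
    |-(y / x ^ 2)| • ((y / x) ^ (-(s + t)) * (y / x - y) ^ (t - 1)) =
      y ^ (-s) * (x ^ (s - 1) * (1 - x) ^ (t - 1)) := by
  obtain ⟨hx0, hx1⟩ := hx
  set u := y / x with hu
  have hu0 : 0 < u := by positivity
  have h1 : y / x ^ 2 = u / x := by rw [hu]; ring
  have h2 : y / x - y = u * (1 - x) := by rw [hu]; field_simp
  rw [smul_eq_mul, abs_neg, h1, abs_of_pos (by positivity), h2, mul_rpow hu0.le (by linarith)]
  have h3 : u * (u ^ (-(s + t)) * u ^ (t - 1)) = u ^ (-s) := by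
    rw [show -s = 1 + (-(s + t) + (t - 1)) by ring, rpow_add hu0, rpow_add hu0, rpow_one]
  have h4 : u ^ (-s) = y ^ (-s) * x ^ s := by
    rw [hu, div_rpow hy.le hx0.le, rpow_neg hx0.le]; field_simp
  calc _ = u * (u ^ (-(s + t)) * u ^ (t - 1)) / x * (1 - x) ^ (t - 1) := by ring
    _ = _ := by rw [h3, h4, rpow_sub_one hx0.ne']; ring

theorem integral_Ioi_rpow_neg_mul_sub_rpow {y s t : ℝ} (hy : 0 < y) (hs : 0 < s) (ht : 0 < t) :
    ∫ z in Ioi y, z ^ (-(s + t)) * (z - y) ^ (t - 1) =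
      y ^ (-s) * (Gamma s * Gamma t / Gamma (s + t)) := by
  have hderiv : ∀ x ∈ Ioo (0 : ℝ) 1, HasDerivWithinAt (y / ·) (-(y / x ^ 2)) (Ioo 0 1) x :=
    fun x hx => by
      simpa only [mul_neg, ← div_eq_mul_inv] using
        ((hasDerivAt_inv hx.1.ne').const_mul y).hasDerivWithinAt
  have hinj : InjOn (y / ·) (Ioo (0 : ℝ) 1) := fun a _ b _ hab => by
    simpa [div_eq_mul_inv, hy.ne'] using hab
  rw [← image_div_Ioo_zero_one hy,
    integral_image_eq_integral_abs_deriv_smul measurableSet_Ioo hderiv hinj,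
    setIntegral_congr_fun measurableSet_Ioo fun x hx =>
      abs_deriv_smul_rpow_neg_mul_sub_rpow hy hx,
    integral_const_mul, integral_Ioo_rpow_mul_one_sub_rpow hs ht]

theorem integrableOn_Ioi_rpow_neg_mul_sub_rpow {y s t : ℝ} (hy : 0 < y) (hs : 0 < s)
    (ht : 0 < t) : IntegrableOn (fun z => z ^ (-(s + t)) * (z - y) ^ (t - 1)) (Ioi y) := by
  -- the integral is positive, while a non-integrable function has Bochner integral `0`
  refine Integrable.of_integral_ne_zero ?_
  rw [integral_Ioi_rpow_neg_mul_sub_rpow hy hs ht]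
  have := Gamma_pos_of_pos hs
  have := Gamma_pos_of_pos ht
  have := Gamma_pos_of_pos (add_pos hs ht)
  positivity

theorem norm_integral_Ioi_mul_sub_pow_le {g : ℝ → ℂ} {A α y : ℝ} (n : ℕ)
    (hint : IntegrableOn (fun z => z ^ (-α) * (z - y) ^ (n : ℝ)) (Ioi y))
    (hg : ∀ z, y < z → ‖g z‖ ≤ A * z ^ (-α)) :
    ‖∫ z in Ioi y, g z * ((y : ℂ) - z) ^ n‖ ≤
      A * ∫ z in Ioi y, z ^ (-α) * (z - y) ^ (n : ℝ) := by
  rw [← integral_const_mul]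
  refine norm_integral_le_of_norm_le (hint.const_mul A) ?_
  refine (ae_restrict_iff' measurableSet_Ioi).2 (.of_forall fun z (hz : y < z) => ?_)
  have hyz : ‖(y : ℂ) - z‖ = z - y := by
    rw [← Complex.ofReal_sub, Complex.norm_real, norm_of_nonpos (by linarith)]; ring
  rw [norm_mul, norm_pow, hyz, rpow_natCast, ← mul_assoc]
  exact mul_le_mul_of_nonneg_right (hg z hz) (pow_nonneg (by linarith) n)

theorem stmt_13_general (g : ℝ → ℂ) (A α : ℝ)
    (k : ℕ) (hk : 1 ≤ k) (hαk : α - k ∈ Set.Ioc (1:ℝ) 2)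
    (hg : ∀ y : ℝ, 0 < y → ‖g y‖ ≤ A * y ^ (-α))
    (h : ℝ → ℂ)
    (hdef : ∀ y : ℝ, 0 < y →
      h y = -(((k - 1).factorial : ℂ))⁻¹ *
        ∫ z in Set.Ioi y, g z * ((y : ℂ) - (z : ℂ)) ^ (k - 1)) :
    ∀ y : ℝ, 0 < y →
      ‖h y‖ ≤ A * Real.Gamma (α - k) / (y ^ (α - k) * Real.Gamma α) := by
  intro y hy
  obtain ⟨n, rfl⟩ := Nat.exists_eq_add_of_le' hk
  set s := α - ↑(n + 1) with hs_def
  have hs : 0 < s := by linarith [hαk.1]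
  have hα : s + (n + 1) = α := by push_cast [hs_def]; ring
  have hI := integral_Ioi_rpow_neg_mul_sub_rpow hy hs (t := n + 1) (by positivity)
  have hint := integrableOn_Ioi_rpow_neg_mul_sub_rpow hy hs (t := n + 1) (by positivity)
  rw [hα, add_sub_cancel_right] at hI hint
  rw [Gamma_nat_eq_factorial] at hI
  have hbound := norm_integral_Ioi_mul_sub_pow_le n hint fun z hz => hg z (hy.trans hz)
  rw [hI] at hbound
  rw [hdef y hy, Nat.add_sub_cancel, norm_mul, norm_neg, norm_inv, Complex.norm_natCast]
  calc (n.factorial : ℝ)⁻¹ * ‖∫ z in Ioi y, g z * ((y : ℂ) - z) ^ n‖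
      ≤ (n.factorial : ℝ)⁻¹ * (A * (y ^ (-s) * (Gamma s * n.factorial / Gamma α))) := by
        gcongr
    _ = A * Gamma s / (y ^ s * Gamma α) := by
        rw [rpow_neg hy.le]; field_simp

theorem stmt_13 (g : ℝ → ℂ) (A α : ℝ) (hA : 0 ≤ A) (hα : 2 < α)
    (k : ℕ) (hk : 1 ≤ k) (hαk : α - k ∈ Set.Ioc (1:ℝ) 2)
    (hg : ∀ y : ℝ, 0 < y → ‖g y‖ ≤ A * y ^ (-α))
    (h : ℝ → ℂ)
    (hdef : ∀ y : ℝ, 0 < y →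
      h y = -(((k - 1).factorial : ℂ))⁻¹ *
        ∫ z in Set.Ioi y, g z * ((y : ℂ) - (z : ℂ)) ^ (k - 1)) :
    ∀ y : ℝ, 0 < y →
      ‖h y‖ ≤ A * Real.Gamma (α - k) / (y ^ (α - k) * Real.Gamma α) :=
  stmt_13_general g A α k hk hαk hg h hdef
end

section
/- Let 𝒩 be a map on a Banach space such that for some constants a ≥ 0 and a ball B = {F : ‖F‖ ≤ b‖F₀‖} with b > 1: ‖𝒩F‖ ≤ a·‖F‖/(1 − c‖F‖) + ‖F₀‖ whenever c‖F‖ < 1, and ‖𝒩(F+h) − 𝒩F‖ ≤ a·‖h‖/(1 − c(‖F‖+‖h‖))² whenever c(‖F‖+‖h‖) < 1. If c·b‖F₀‖ < 1, a/(1 − c·b‖F₀‖) < 1 − 1/b, and a/(1 − c·b‖F₀‖)² < 1, then 𝒩 maps B into B, is a contraction on B, and hence has a unique fixed point in B. -/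
/-!
On the ball of radius `R = b‖F₀‖` the growth bound and `a / (1 - cR) < 1 - 1/b` give
`‖𝒩 F‖ ≤ (1 - 1/b) R + ‖F₀‖ = R`. The increment bound only controls short steps, since its
denominator involves `‖F‖ + ‖h‖`; so the segment from `G` to `F` is cut into `n` equal steps,
which stay in the ball by convexity. This gives the Lipschitz constant
`a / (1 - c (R + ‖F - G‖ / n))²`, which tends to `a / (1 - cR)² < 1` as `n → ∞`, and Banach's
fixed point theorem on the (complete) ball finishes the proof.
-/

open Set Filter Topology Metric

section Subdivision

variable {E F : Type*} [NormedAddCommGroup E] [NormedSpace ℝ E] [SeminormedAddCommGroup F]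
  {f : E → F} {s : Set E}

theorem Convex.norm_sub_le_of_step_le (hs : Convex ℝ s) {x y : E} (hx : x ∈ s) (hy : y ∈ s)
    {n : ℕ} (hn : n ≠ 0) {C : ℝ}
    (hf : ∀ z ∈ s, z + (n : ℝ)⁻¹ • (y - x) ∈ s → ‖f (z + (n : ℝ)⁻¹ • (y - x)) - f z‖ ≤ C) :
    ‖f y - f x‖ ≤ n * C := by
  have hn' : (n : ℝ) ≠ 0 := Nat.cast_ne_zero.mpr hn
  set p : ℕ → E := fun i => x + ((i : ℝ) / n) • (y - x)
  have hp_mem : ∀ i ≤ n, p i ∈ s := fun i hi =>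
    hs.add_smul_sub_mem hx hy
      ⟨by positivity, div_le_one_of_le₀ (by exact_mod_cast hi) n.cast_nonneg⟩
  have hp_succ : ∀ i, p (i + 1) = p i + (n : ℝ)⁻¹ • (y - x) := fun i => by
    simp only [p, Nat.cast_succ, add_div, add_smul, add_assoc, one_div]
  have hp_last : p n = y := by simp [p, div_self hn']
  have hsum := dist_le_range_sum_of_dist_le (f := fun i => f (p i)) (d := fun _ => C) n
    fun {i} hi => by
      rw [dist_comm, dist_eq_norm, hp_succ]
      exact hf _ (hp_mem i hi.le) (hp_succ i ▸ hp_mem (i + 1) hi)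
  simpa [p, hp_last, dist_eq_norm', norm_sub_rev] using hsum

theorem Convex.norm_sub_le_of_tendsto_increment_bound (hs : Convex ℝ s) {K : ℝ → ℝ} {L : ℝ}
    (hK : Tendsto K (𝓝[>] 0) (𝓝 L))
    (hf : ∀ᶠ t in 𝓝[>] 0, ∀ z ∈ s, ∀ h : E, ‖h‖ = t → z + h ∈ s →
      ‖f (z + h) - f z‖ ≤ K t * t)
    {x y : E} (hx : x ∈ s) (hy : y ∈ s) : ‖f y - f x‖ ≤ L * ‖y - x‖ := by
  rcases eq_or_ne x y with rfl | hxy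
  · simp
  set d := ‖y - x‖
  have hd : 0 < d := norm_pos_iff.mpr (sub_ne_zero.mpr hxy.symm)
  have h_steps : Tendsto (fun n : ℕ => d / n) atTop (𝓝[>] 0) :=
    tendsto_nhdsWithin_iff.mpr ⟨tendsto_const_div_atTop_nhds_zero_nat d,
      eventually_atTop.mpr ⟨1, fun n hn => div_pos hd (by exact_mod_cast hn)⟩⟩
  have h_bound : ∀ᶠ n : ℕ in atTop, ‖f y - f x‖ ≤ K (d / n) * d := by
    filter_upwards [h_steps.eventually hf, eventually_ne_atTop 0] with n hn hn0
    have hn' : (n : ℝ) ≠ 0 := Nat.cast_ne_zero.mpr hn0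
    calc ‖f y - f x‖ ≤ n * (K (d / n) * (d / n)) :=
          hs.norm_sub_le_of_step_le hx hy hn0 fun z hz hzh => hn z hz _
            (by rw [norm_smul, norm_inv, RCLike.norm_natCast, inv_mul_eq_div]) hzh
      _ = K (d / n) * d := by field_simp
  exact ge_of_tendsto ((hK.comp h_steps).mul_const d) h_bound

end Subdivision

theorem LipschitzOnWith.existsUnique_fixedPoint {α : Type*} [MetricSpace α]
    {f : α → α} {s : Set α} {K : NNReal} (hf : LipschitzOnWith K f s) (hK : K < 1)
    (hsc : IsComplete s) (hne : s.Nonempty) (hsf : MapsTo f s s) :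
    ∃! x, x ∈ s ∧ f x = x := by
  obtain ⟨x₀, hx₀⟩ := hne
  obtain ⟨x, hxs, hx, -⟩ := ContractingWith.exists_fixedPoint' hsc hsf
    ⟨hK, hf.mapsToRestrict hsf⟩ hx₀ (edist_ne_top _ _)
  refine ⟨x, ⟨hxs, hx⟩, fun y ⟨hys, hy⟩ => ?_⟩
  have h := hf.dist_le_mul y hys x hxs
  rw [hy, hx] at h
  have : dist y x = 0 := by nlinarith [dist_nonneg (x := y) (y := x), (NNReal.coe_lt_one).mpr hK]
  exact dist_eq_zero.mp this

section BallEstimates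

variable {X : Type*} [NormedAddCommGroup X] {𝒩 : X → X} {a c R : ℝ}

theorem mul_div_one_sub_mul_le (ha : 0 ≤ a) (hc : 0 ≤ c) {x : ℝ} (hxR : x ≤ R)
    (hcR : c * R < 1) : a * x / (1 - c * x) ≤ a / (1 - c * R) * R := by
  have hcx : c * x ≤ c * R := mul_le_mul_of_nonneg_left hxR hc
  rw [div_mul_eq_mul_div, div_le_div_iff₀ (by linarith) (by linarith)]
  nlinarith [mul_le_mul_of_nonneg_left hxR ha]

theorem norm_le_of_growth_bound {F₀ : X} {b : ℝ} (ha : 0 ≤ a) (hc : 0 ≤ c) (hb : 0 < b)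
    (hmap : ∀ F : X, c * ‖F‖ < 1 → ‖𝒩 F‖ ≤ a * ‖F‖ / (1 - c * ‖F‖) + ‖F₀‖)
    (hcR : c * (b * ‖F₀‖) < 1) (hab : a / (1 - c * (b * ‖F₀‖)) ≤ 1 - 1 / b)
    {F : X} (hF : ‖F‖ ≤ b * ‖F₀‖) : ‖𝒩 F‖ ≤ b * ‖F₀‖ := by
  have hcF : c * ‖F‖ < 1 := (mul_le_mul_of_nonneg_left hF hc).trans_lt hcR
  calc ‖𝒩 F‖ ≤ a * ‖F‖ / (1 - c * ‖F‖) + ‖F₀‖ := hmap F hcF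
    _ ≤ a / (1 - c * (b * ‖F₀‖)) * (b * ‖F₀‖) + ‖F₀‖ := by
      gcongr
      exact mul_div_one_sub_mul_le ha hc hF hcR
    _ ≤ (1 - 1 / b) * (b * ‖F₀‖) + ‖F₀‖ := by gcongr
    _ = b * ‖F₀‖ := by field_simp; ring

theorem norm_sub_le_of_increment_bound [NormedSpace ℝ X] (ha : 0 ≤ a) (hc : 0 ≤ c)
    (hcR : c * R < 1)
    (hlip : ∀ F h : X, c * (‖F‖ + ‖h‖) < 1 →
      ‖𝒩 (F + h) - 𝒩 F‖ ≤ a * ‖h‖ / (1 - c * (‖F‖ + ‖h‖)) ^ 2)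
    {F G : X} (hF : ‖F‖ ≤ R) (hG : ‖G‖ ≤ R) : ‖𝒩 F - 𝒩 G‖ ≤ a / (1 - c * R) ^ 2 * ‖F - G‖ := by
  set K : ℝ → ℝ := fun t => a / (1 - c * (R + t)) ^ 2
  have hK_cont : ContinuousAt K 0 := by
    have : (1 - c * (R + 0)) ^ 2 ≠ 0 := by simp only [add_zero]; nlinarith
    fun_prop (disch := exact this)
  have h_small : ∀ᶠ t in 𝓝 (0 : ℝ), c * (R + t) < 1 :=
    (continuous_const.mul (continuous_const.add continuous_id)).continuousAt.eventually_lt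
      continuousAt_const (by simpa using hcR)
  refine (convex_closedBall (0 : X) R).norm_sub_le_of_tendsto_increment_bound
    (by simpa [K] using hK_cont.tendsto.mono_left nhdsWithin_le_nhds) ?_
    (mem_closedBall_zero_iff.mpr hG) (mem_closedBall_zero_iff.mpr hF)
  filter_upwards [nhdsWithin_le_nhds h_small] with t ht z hz h rfl _
  have hsum : c * (‖z‖ + ‖h‖) ≤ c * (R + ‖h‖) :=
    mul_le_mul_of_nonneg_left (by linarith [mem_closedBall_zero_iff.mp hz]) hc
  calc ‖𝒩 (z + h) - 𝒩 z‖ ≤ a * ‖h‖ / (1 - c * (‖z‖ + ‖h‖)) ^ 2 := hlip z h (by linarith)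
    _ ≤ a * ‖h‖ / (1 - c * (R + ‖h‖)) ^ 2 := by gcongr
    _ = K ‖h‖ * ‖h‖ := by simp only [K]; ring

end BallEstimates

theorem stmt_15_general {X : Type*} [NormedAddCommGroup X] [NormedSpace ℝ X] [CompleteSpace X]
    (𝒩 : X → X) (F₀ : X) (a c b : ℝ)
    (ha : 0 ≤ a) (hc : 0 ≤ c) (hb : 1 < b)
    (hmap : ∀ F : X, c * ‖F‖ < 1 → ‖𝒩 F‖ ≤ a * ‖F‖ / (1 - c * ‖F‖) + ‖F₀‖)
    (hlip : ∀ F h : X, c * (‖F‖ + ‖h‖) < 1 →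
      ‖𝒩 (F + h) - 𝒩 F‖ ≤ a * ‖h‖ / (1 - c * (‖F‖ + ‖h‖)) ^ 2)
    (h1 : c * b * ‖F₀‖ < 1)
    (h2 : a / (1 - c * b * ‖F₀‖) < 1 - 1 / b)
    (h3 : a / (1 - c * b * ‖F₀‖) ^ 2 < 1) :
    (∀ F : X, ‖F‖ ≤ b * ‖F₀‖ → ‖𝒩 F‖ ≤ b * ‖F₀‖) ∧
    (∃ L : ℝ, 0 ≤ L ∧ L < 1 ∧
      ∀ F G : X, ‖F‖ ≤ b * ‖F₀‖ → ‖G‖ ≤ b * ‖F₀‖ → ‖𝒩 F - 𝒩 G‖ ≤ L * ‖F - G‖) ∧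
    (∃! F : X, ‖F‖ ≤ b * ‖F₀‖ ∧ 𝒩 F = F) := by
  simp only [mul_assoc] at h1 h2 h3
  have hb0 : 0 < b := by linarith
  have hmapsTo (F : X) (hF : ‖F‖ ≤ b * ‖F₀‖) : ‖𝒩 F‖ ≤ b * ‖F₀‖ :=
    norm_le_of_growth_bound ha hc hb0 hmap h1 h2.le hF
  set L : NNReal := ⟨a / (1 - c * (b * ‖F₀‖)) ^ 2, by positivity⟩
  have hlipB (F G : X) (hF : ‖F‖ ≤ b * ‖F₀‖) (hG : ‖G‖ ≤ b * ‖F₀‖) :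
      ‖𝒩 F - 𝒩 G‖ ≤ L * ‖F - G‖ :=
    norm_sub_le_of_increment_bound ha hc h1 hlip hF hG
  refine ⟨hmapsTo, ⟨L, L.2, h3, hlipB⟩, ?_⟩
  have hlipOn : LipschitzOnWith L 𝒩 (closedBall 0 (b * ‖F₀‖)) :=
    .of_dist_le_mul fun F hF G hG => by
      simpa only [dist_eq_norm] using
        hlipB F G (mem_closedBall_zero_iff.mp hF) (mem_closedBall_zero_iff.mp hG)
  simpa only [mem_closedBall_zero_iff] using
    hlipOn.existsUnique_fixedPoint (by exact_mod_cast h3) isClosed_closedBall.isComplete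
      (nonempty_closedBall.mpr (by positivity))
      fun F hF => mem_closedBall_zero_iff.mpr (hmapsTo F (mem_closedBall_zero_iff.mp hF))

theorem stmt_15 {X : Type*} [NormedAddCommGroup X] [NormedSpace ℝ X] [CompleteSpace X]
    (𝒩 : X → X) (F₀ : X) (a c b : ℝ)
    (ha : 0 ≤ a) (hc : 0 ≤ c) (hb : 1 < b) (hF₀ : 0 < ‖F₀‖)
    (hmap : ∀ F : X, c * ‖F‖ < 1 → ‖𝒩 F‖ ≤ a * ‖F‖ / (1 - c * ‖F‖) + ‖F₀‖)
    (hlip : ∀ F h : X, c * (‖F‖ + ‖h‖) < 1 →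
      ‖𝒩 (F + h) - 𝒩 F‖ ≤ a * ‖h‖ / (1 - c * (‖F‖ + ‖h‖)) ^ 2)
    (h1 : c * b * ‖F₀‖ < 1)
    (h2 : a / (1 - c * b * ‖F₀‖) < 1 - 1 / b)
    (h3 : a / (1 - c * b * ‖F₀‖) ^ 2 < 1) :
    (∀ F : X, ‖F‖ ≤ b * ‖F₀‖ → ‖𝒩 F‖ ≤ b * ‖F₀‖) ∧
    (∃ L : ℝ, 0 ≤ L ∧ L < 1 ∧
      ∀ F G : X, ‖F‖ ≤ b * ‖F₀‖ → ‖G‖ ≤ b * ‖F₀‖ → ‖𝒩 F - 𝒩 G‖ ≤ L * ‖F - G‖) ∧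
    (∃! F : X, ‖F‖ ≤ b * ‖F₀‖ ∧ 𝒩 F = F) :=
  stmt_15_general 𝒩 F₀ a c b ha hc hb hmap hlip h1 h2 h3
end

section
/- If F : [0,∞) × [0,T] → ℂ is continuous, F(·,t) bounded on compacts uniformly in t, and satisfies F(p,t) = ∫₀^t e^{−p³(t−τ)}(𝒢F)(p,τ) dτ + F₀(p,t), where |F₀(p,t)| ≤ K₃·p^{α−1} for small p with α ≥ 1, and 𝒢 is linear with sup-norm on {p ≤ a}×[0,T] satisfying ‖∫₀^t e^{−p³(t−τ)}𝒢F dτ‖_{∞,a} ≤ ε(a)·‖F‖_{∞,a} with ε(a) → 0 as a → 0, then for all sufficiently small a: sup_{p≤a, t≤T} |F(p,t)| ≤ 2K₃·a^{α−1}, and hence |F(p,t)| ≤ 2K₃·p^{α−1} for small p. -/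
open MeasureTheory Real Set

/-- Sup norm of `F(p,t)` over `{0 ≤ p ≤ a} × {0 ≤ t ≤ T}`. -/
noncomputable def supNorm (T a : ℝ) (F : ℝ → ℝ → ℂ) : ℝ :=
  sSup ((fun pt : ℝ × ℝ => ‖F pt.1 pt.2‖) '' (Set.Icc 0 a ×ˢ Set.Icc 0 T))

theorem stmt_19 (T K₃ α : ℝ) (hT : 0 < T) (hK₃ : 0 ≤ K₃) (hα : 1 ≤ α)
    (F F₀ : ℝ → ℝ → ℂ) (𝒢 : (ℝ → ℝ → ℂ) → (ℝ → ℝ → ℂ))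
    (hlin : IsLinearMap ℂ 𝒢)
    (hcont : ContinuousOn (fun pt : ℝ × ℝ => F pt.1 pt.2) (Set.Ici 0 ×ˢ Set.Icc 0 T))
    (hbdd : ∀ a : ℝ, 0 < a →
      BddAbove ((fun pt : ℝ × ℝ => ‖F pt.1 pt.2‖) '' (Set.Icc 0 a ×ˢ Set.Icc 0 T)))
    (a₀ : ℝ) (ha₀ : 0 < a₀)
    (hF₀ : ∀ p ∈ Set.Icc 0 a₀, ∀ t ∈ Set.Icc 0 T, ‖F₀ p t‖ ≤ K₃ * p ^ (α - 1))
    (ε : ℝ → ℝ)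
    (hε : Filter.Tendsto ε (nhdsWithin 0 (Set.Ioi 0)) (nhds 0))
    (hop : ∀ a : ℝ, 0 < a →
      supNorm T a (fun p t =>
          ∫ τ in (0:ℝ)..t, (Real.exp (-p ^ 3 * (t - τ)) : ℂ) * 𝒢 F p τ) ≤
        ε a * supNorm T a F)
    (heq : ∀ p : ℝ, 0 ≤ p → ∀ t ∈ Set.Icc 0 T,
      F p t = (∫ τ in (0:ℝ)..t, (Real.exp (-p ^ 3 * (t - τ)) : ℂ) * 𝒢 F p τ) + F₀ p t) :
    ∃ a₁ : ℝ, 0 < a₁ ∧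
      (∀ a : ℝ, 0 < a → a ≤ a₁ → supNorm T a F ≤ 2 * K₃ * a ^ (α - 1)) ∧
      (∀ p : ℝ, 0 < p → p ≤ a₁ → ∀ t ∈ Set.Icc 0 T, ‖F p t‖ ≤ 2 * K₃ * p ^ (α - 1)) := by
  -- extract δ from the tendsto hypothesis
  obtain ⟨δ, hδ, hδε⟩ := Metric.tendsto_nhdsWithin_nhds.mp hε (1/2) (by norm_num)
  set a₁ : ℝ := min a₀ (δ/2) with ha₁def
  have ha₁pos : 0 < a₁ := lt_min ha₀ (by linarith)
  have hεsmall : ∀ a : ℝ, 0 < a → a ≤ a₁ → ε a ≤ 1/2 := by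
    intro a ha haa
    have : dist (ε a) 0 < 1/2 := by
      apply hδε ha
      rw [Real.dist_eq, sub_zero, abs_of_pos ha]
      have : a ≤ δ/2 := le_trans haa (min_le_right _ _)
      linarith
    rw [Real.dist_eq, sub_zero] at this
    exact le_of_lt (lt_of_le_of_lt (le_abs_self _) this)
  have hmain : ∀ a : ℝ, 0 < a → a ≤ a₁ → supNorm T a F ≤ 2 * K₃ * a ^ (α - 1) := by
    intro a ha haa
    have haa₀ : a ≤ a₀ := le_trans haa (min_le_left _ _)
    set S := supNorm T a F with hS
    set I : ℝ → ℝ → ℂ := fun p t =>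
      ∫ τ in (0:ℝ)..t, (Real.exp (-p ^ 3 * (t - τ)) : ℂ) * 𝒢 F p τ with hI
    -- S is nonnegative
    have hSnn : 0 ≤ S := by
      apply Real.sSup_nonneg
      rintro x ⟨pt, _, rfl⟩
      exact norm_nonneg _
    -- each ‖F p t‖ ≤ S
    have hFleS : ∀ p ∈ Set.Icc 0 a, ∀ t ∈ Set.Icc 0 T, ‖F p t‖ ≤ S := by
      intro p hp t ht
      exact le_csSup (hbdd a ha) ⟨(p, t), ⟨hp, ht⟩, rfl⟩
    -- F₀ bound with a-power
    have hF₀a : ∀ p ∈ Set.Icc 0 a, ∀ t ∈ Set.Icc 0 T, ‖F₀ p t‖ ≤ K₃ * a ^ (α - 1) := by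
      intro p hp t ht
      have h1 : ‖F₀ p t‖ ≤ K₃ * p ^ (α - 1) :=
        hF₀ p ⟨hp.1, le_trans hp.2 haa₀⟩ t ht
      have h2 : p ^ (α - 1) ≤ a ^ (α - 1) :=
        Real.rpow_le_rpow hp.1 hp.2 (by linarith)
      exact h1.trans (by nlinarith)
    -- the integral term image is bdd above
    have hIbdd : BddAbove ((fun pt : ℝ × ℝ => ‖I pt.1 pt.2‖) '' (Set.Icc 0 a ×ˢ Set.Icc 0 T)) := by
      refine ⟨S + K₃ * a ^ (α - 1), ?_⟩
      rintro x ⟨⟨p, t⟩, ⟨hp, ht⟩, rfl⟩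
      have hFeq := heq p hp.1 t ht
      have h3 : I p t = F p t - F₀ p t := by rw [hI, hFeq]; ring
      show ‖I p t‖ ≤ _
      rw [h3]
      calc ‖F p t - F₀ p t‖ ≤ ‖F p t‖ + ‖F₀ p t‖ := norm_sub_le _ _
        _ ≤ S + K₃ * a ^ (α - 1) := add_le_add (hFleS p hp t ht) (hF₀a p hp t ht)
    have hIle : ∀ p ∈ Set.Icc 0 a, ∀ t ∈ Set.Icc 0 T, ‖I p t‖ ≤ supNorm T a I := by
      intro p hp t ht
      exact le_csSup hIbdd ⟨(p, t), ⟨hp, ht⟩, rfl⟩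
    have hopa : supNorm T a I ≤ ε a * S := hop a ha
    -- so for each point
    have hpoint : ∀ p ∈ Set.Icc 0 a, ∀ t ∈ Set.Icc 0 T,
        ‖F p t‖ ≤ ε a * S + K₃ * a ^ (α - 1) := by
      intro p hp t ht
      rw [heq p hp.1 t ht]
      calc ‖I p t + F₀ p t‖ ≤ ‖I p t‖ + ‖F₀ p t‖ := norm_add_le _ _
        _ ≤ supNorm T a I + K₃ * a ^ (α - 1) :=
            add_le_add (hIle p hp t ht) (hF₀a p hp t ht)
        _ ≤ ε a * S + K₃ * a ^ (α - 1) := by linarith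
    -- take sup
    have hne : ((fun pt : ℝ × ℝ => ‖F pt.1 pt.2‖) ''
        (Set.Icc 0 a ×ˢ Set.Icc 0 T)).Nonempty := by
      exact ⟨‖F 0 0‖, ⟨(0, 0), ⟨⟨le_refl _, ha.le⟩, ⟨le_refl _, hT.le⟩⟩, rfl⟩⟩
    have hSle : S ≤ ε a * S + K₃ * a ^ (α - 1) := by
      apply csSup_le hne
      rintro x ⟨⟨p, t⟩, ⟨hp, ht⟩, rfl⟩
      exact hpoint p hp t ht
    have hεa : ε a ≤ 1/2 := hεsmall a ha haa
    have : ε a * S ≤ (1/2) * S := mul_le_mul_of_nonneg_right hεa hSnn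
    linarith
  refine ⟨a₁, ha₁pos, hmain, ?_⟩
  intro p hp hpa₁ t ht
  have h1 : ‖F p t‖ ≤ supNorm T p F :=
    le_csSup (hbdd p hp) ⟨(p, t), ⟨⟨hp.le, le_refl _⟩, ht⟩, rfl⟩
  exact h1.trans (hmain p hp hpa₁)
end
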